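/- arXiv:2308.09283 — 2 statements merged into one kernel-verified Lean document; each statement's English description precedes it below -/
import Mathlib

section
/- Let α, β, γ ≥ 0 with β ≥ 4α and γ ≥ A e − α + β for some 0 < A ≤ 1. Let θ ∈ (0,2π), m ≥ 1, r = exp(e^{iθ}), s = m e^{iθ} r, and t, u ∈ ℂ satisfy Re(1 + t/s) ≥ m(1 + cos θ) and Re(u/s) ≥ m cos 2θ with cos 2θ ≥ 0. Then |α u + β t + γ s| ≥ A. -/
/-!
Divide by `s`: the hypotheses bound `Re (u / s)` and `Re (t / s)` from below, and the condition
`β ≥ 4α` makes the resulting lower bound `Re ((αu + βt + γs) / s) ≥ A e` hold, since it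
reduces to `α (m (2 (cos θ + 1)² + 1) - 1) ≥ 0`. Multiplying back by `‖s‖ = m e^{cos θ} ≥ e^{-1}`
gives `‖αu + βt + γs‖ ≥ ‖s‖ · Re (…/s) ≥ A`.
-/

open Real Complex

lemma norm_exp_ofReal_mul_I_mul_exp_exp (θ : ℝ) :
    ‖exp (θ * I) * exp (exp (θ * I))‖ = Real.exp (Real.cos θ) := by
  rw [norm_mul, norm_exp_ofReal_mul_I, norm_exp, exp_ofReal_mul_I_re, one_mul]

lemma norm_mul_re_div_le_norm (z s : ℂ) : ‖s‖ * (z / s).re ≤ ‖z‖ := by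
  rcases eq_or_ne s 0 with rfl | hs
  · simp
  calc ‖s‖ * (z / s).re ≤ ‖s‖ * ‖z / s‖ := by gcongr; exact re_le_norm _
    _ = ‖z‖ := by rw [norm_div, mul_div_cancel₀ _ (norm_ne_zero_iff.mpr hs)]

lemma nonneg_of_four_mul_le {α β m c : ℝ} (hα : 0 ≤ α) (hβα : 4 * α ≤ β) (hm : 1 ≤ m)
    (hc : -1 ≤ c) : 0 ≤ α * (m * (2 * c ^ 2 - 1) - 1) + β * (m * (1 + c)) := by
  have hβ : 4 * α * (m * (1 + c)) ≤ β * (m * (1 + c)) := by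
    gcongr
    nlinarith
  have hα' : 0 ≤ α * (m * (2 * (c + 1) ^ 2 + 1) - 1) := by
    apply mul_nonneg hα
    nlinarith [sq_nonneg (c + 1)]
  nlinarith

lemma le_re_div_of_le_re {K α β γ m θ : ℝ} {s t u : ℂ} (hs : s ≠ 0) (hα : 0 ≤ α)
    (hβα : 4 * α ≤ β) (hγ : K - α + β ≤ γ) (hm : 1 ≤ m)
    (ht : m * (1 + Real.cos θ) ≤ (1 + t / s).re) (hu : m * Real.cos (2 * θ) ≤ (u / s).re) :
    K ≤ (((α : ℂ) * u + (β : ℂ) * t + (γ : ℂ) * s) / s).re := by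
  have hdiv : ((α : ℂ) * u + (β : ℂ) * t + (γ : ℂ) * s) / s = α * (u / s) + β * (t / s) + γ := by
    field_simp
  have ht' : m * (1 + Real.cos θ) - 1 ≤ (t / s).re := by
    rw [add_re, one_re] at ht; linarith
  rw [Real.cos_two_mul] at hu
  have hpoly := nonneg_of_four_mul_le (c := Real.cos θ) hα hβα hm (Real.neg_one_le_cos θ)
  rw [hdiv]
  simp only [add_re, re_ofReal_mul, ofReal_re]
  nlinarith [mul_le_mul_of_nonneg_left hu hα, mul_le_mul_of_nonneg_left ht' (by linarith : 0 ≤ β)]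

theorem stmt_9_general (A α β γ θ m : ℝ)
    (hA : 0 < A) (hα : 0 ≤ α) (hβα : 4 * α ≤ β)
    (hγ : A * Real.exp 1 - α + β ≤ γ)
    (hm : 1 ≤ m)
    (r s t u : ℂ)
    (hr : r = Complex.exp (Complex.exp (θ * Complex.I)))
    (hs : s = (m : ℂ) * Complex.exp (θ * Complex.I) * r)
    (ht : m * (1 + Real.cos θ) ≤ (1 + t / s).re)
    (hu : m * Real.cos (2 * θ) ≤ (u / s).re) :
    A ≤ ‖(α : ℂ) * u + (β : ℂ) * t + (γ : ℂ) * s‖ := by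
  have hnorm_s : ‖s‖ = m * Real.exp (Real.cos θ) := by
    rw [hs, hr, mul_assoc, norm_mul, norm_exp_ofReal_mul_I_mul_exp_exp, norm_real,
      Real.norm_of_nonneg (by linarith)]
  have hs0 : s ≠ 0 := norm_pos_iff.mp (by rw [hnorm_s]; positivity)
  have hre := le_re_div_of_le_re hs0 hα hβα hγ hm ht hu
  have hexp : 1 ≤ m * (Real.exp (Real.cos θ) * Real.exp 1) := by
    rw [← Real.exp_add]
    exact one_le_mul_of_one_le_of_one_le hm
      (Real.one_le_exp (by linarith [Real.neg_one_le_cos θ]))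
  calc A ≤ A * (m * (Real.exp (Real.cos θ) * Real.exp 1)) := le_mul_of_one_le_right hA.le hexp
    _ = ‖s‖ * (A * Real.exp 1) := by rw [hnorm_s]; ring
    _ ≤ ‖s‖ * (((α : ℂ) * u + (β : ℂ) * t + (γ : ℂ) * s) / s).re := by gcongr
    _ ≤ _ := norm_mul_re_div_le_norm _ _

theorem stmt_9 (A α β γ θ m : ℝ)
    (hA : 0 < A) (hA1 : A ≤ 1) (hα : 0 ≤ α) (hβ : 0 ≤ β) (hγ0 : 0 ≤ γ) (hβα : 4 * α ≤ β)
    (hγ : A * Real.exp 1 - α + β ≤ γ)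
    (hθ : θ ∈ Set.Ioo 0 (2 * Real.pi)) (hcos : 0 ≤ Real.cos (2 * θ)) (hm : 1 ≤ m)
    (r s t u : ℂ)
    (hr : r = Complex.exp (Complex.exp (θ * Complex.I)))
    (hs : s = (m : ℂ) * Complex.exp (θ * Complex.I) * r)
    (hs0 : s ≠ 0)
    (ht : m * (1 + Real.cos θ) ≤ (1 + t / s).re)
    (hu : m * Real.cos (2 * θ) ≤ (u / s).re) :
    A ≤ ‖(α : ℂ) * u + (β : ℂ) * t + (γ : ℂ) * s‖ :=
  stmt_9_general A α β γ θ m hA hα hβα hγ hm r s t u hr hs ht hu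
end

section
/- Let β₀ be a positive real with |log(z/(2−z))| ≥ 1 whenever |z| ≥ β₀ (for z with z ≠ 0, z ≠ 2 and appropriate branch); assume this characterization. Let α > 0, 0 ≤ β ≤ 4α and γ ≥ β₀ e + α + β²/(8α). Let θ ∈ (0,2π) with cos 2θ ≥ 0, m ≥ 1, r = exp(e^{iθ}), s = m e^{iθ} r, t, u ∈ ℂ with Re(1 + t/s) ≥ m(1 + cos θ) and Re(u/s) ≥ m cos 2θ. Then |α u + β t + γ s| ≥ β₀. -/
/-!
Divide by `s`: the hypotheses bound the real parts of `t / s` and `u / s` from below, so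
`Re ((α u + β t + γ s) / s) ≥ 2α cos² θ + β cos θ - α + γ ≥ γ - α - β² / (8α) ≥ β₀ e`, where the
middle step minimises the quadratic in `cos θ`. Since `|s| = m e^{cos θ} ≥ e⁻¹`, multiplying back
by `|s|` gives `|α u + β t + γ s| ≥ β₀`.
-/

open Real Complex

lemma neg_sq_div_le_quadratic {a : ℝ} (ha : 0 < a) (b x : ℝ) :
    -(b ^ 2 / (8 * a)) ≤ 2 * a * x ^ 2 + b * x := by
  have key : 0 ≤ (4 * a * x + b) ^ 2 / (8 * a) := by positivity
  have expand : (4 * a * x + b) ^ 2 / (8 * a) = 2 * a * x ^ 2 + b * x + b ^ 2 / (8 * a) := by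
    field_simp
    ring
  linarith

lemma sub_sub_sq_div_le_of_le_mul_cos {α β γ θ m x y : ℝ} (hα : 0 < α) (hβ : 0 ≤ β)
    (hcos : 0 ≤ Real.cos (2 * θ)) (hm : 1 ≤ m)
    (hx : m * (1 + Real.cos θ) ≤ 1 + x) (hy : m * Real.cos (2 * θ) ≤ y) :
    γ - α - β ^ 2 / (8 * α) ≤ α * y + β * x + γ := by
  have hαy : α * Real.cos (2 * θ) ≤ α * y := by
    gcongr
    nlinarith
  have hβx : β * Real.cos θ ≤ β * x := by
    gcongr
    nlinarith [Real.neg_one_le_cos θ]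
  have hquad := neg_sq_div_le_quadratic hα β (Real.cos θ)
  rw [Real.cos_two_mul] at hαy
  linarith

lemma re_linear_combination_div {s : ℂ} (hs : s ≠ 0) (α β γ : ℝ) (t u : ℂ) :
    (((α : ℂ) * u + (β : ℂ) * t + (γ : ℂ) * s) / s).re = α * (u / s).re + β * (t / s).re + γ := by
  have hdiv : ((α : ℂ) * u + (β : ℂ) * t + (γ : ℂ) * s) / s = α * (u / s) + β * (t / s) + γ := by
    field_simp
  simp [hdiv]

lemma norm_ofReal_mul_exp_mul_exp_exp {m : ℝ} (hm : 0 ≤ m) (θ : ℝ) :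
    ‖(m : ℂ) * exp (θ * I) * exp (exp (θ * I))‖ = m * Real.exp (Real.cos θ) := by
  rw [norm_mul, norm_mul, norm_exp_ofReal_mul_I, norm_exp, exp_ofReal_mul_I_re, norm_real,
    Real.norm_of_nonneg hm, mul_one]

lemma exp_neg_one_le_norm_ofReal_mul_exp_mul_exp_exp {m : ℝ} (hm : 1 ≤ m) (θ : ℝ) :
    Real.exp (-1) ≤ ‖(m : ℂ) * exp (θ * I) * exp (exp (θ * I))‖ := by
  rw [norm_ofReal_mul_exp_mul_exp_exp (by linarith) θ]
  calc Real.exp (-1) = 1 * Real.exp (-1) := (one_mul _).symm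
    _ ≤ m * Real.exp (Real.cos θ) := by
      gcongr
      exact Real.neg_one_le_cos θ

lemma mul_le_norm_of_le_re_div {a ρ : ℝ} {s w : ℂ} (ha : 0 ≤ a) (hρ : 0 < ρ) (hs : ρ ≤ ‖s‖)
    (hre : a ≤ (w / s).re) : a * ρ ≤ ‖w‖ := by
  have hs0 : s ≠ 0 := norm_pos_iff.mp (hρ.trans_le hs)
  calc a * ρ ≤ (w / s).re * ‖s‖ := mul_le_mul hre hs hρ.le (ha.trans hre)
    _ ≤ ‖w / s‖ * ‖s‖ := by gcongr; exact re_le_norm _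
    _ = ‖w‖ := by rw [norm_div, div_mul_cancel₀ _ (norm_ne_zero_iff.mpr hs0)]

theorem stmt_16_general (β₀ α β γ θ m : ℝ)
    (hβ₀ : 0 < β₀)
    (hα : 0 < α) (hβ : 0 ≤ β)
    (hγ : β₀ * Real.exp 1 + α + β ^ 2 / (8 * α) ≤ γ)
    (hcos : 0 ≤ Real.cos (2 * θ)) (hm : 1 ≤ m)
    (r s t u : ℂ)
    (hr : r = Complex.exp (Complex.exp (θ * Complex.I)))
    (hs : s = (m : ℂ) * Complex.exp (θ * Complex.I) * r)
    (ht : m * (1 + Real.cos θ) ≤ (1 + t / s).re)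
    (hu : m * Real.cos (2 * θ) ≤ (u / s).re) :
    β₀ ≤ ‖(α : ℂ) * u + (β : ℂ) * t + (γ : ℂ) * s‖ := by
  have hs_norm : Real.exp (-1) ≤ ‖s‖ := by
    rw [hs, hr]
    exact exp_neg_one_le_norm_ofReal_mul_exp_mul_exp_exp hm θ
  have hs0 : s ≠ 0 := norm_pos_iff.mp ((Real.exp_pos _).trans_le hs_norm)
  have ht' : m * (1 + Real.cos θ) ≤ 1 + (t / s).re := by simpa using ht
  have hre : β₀ * Real.exp 1 ≤ (((α : ℂ) * u + (β : ℂ) * t + (γ : ℂ) * s) / s).re := by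
    rw [re_linear_combination_div hs0]
    linarith [sub_sub_sq_div_le_of_le_mul_cos (γ := γ) hα hβ hcos hm ht' hu]
  calc β₀ = β₀ * Real.exp 1 * Real.exp (-1) := by
        rw [mul_assoc, ← Real.exp_add, add_neg_cancel, Real.exp_zero, mul_one]
    _ ≤ _ := mul_le_norm_of_le_re_div (by positivity) (Real.exp_pos _) hs_norm hre

theorem stmt_16 (β₀ α β γ θ m : ℝ)
    (hβ₀ : 0 < β₀)
    (hlog : ∀ z : ℂ, z ≠ 0 → z ≠ 2 → ¬((z / (2 - z)).im = 0 ∧ (z / (2 - z)).re ≤ 0) →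
      β₀ ≤ ‖z‖ → 1 ≤ ‖Complex.log (z / (2 - z))‖)
    (hα : 0 < α) (hβ : 0 ≤ β) (hβα : β ≤ 4 * α)
    (hγ : β₀ * Real.exp 1 + α + β ^ 2 / (8 * α) ≤ γ)
    (hθ : θ ∈ Set.Ioo 0 (2 * Real.pi)) (hcos : 0 ≤ Real.cos (2 * θ)) (hm : 1 ≤ m)
    (r s t u : ℂ)
    (hr : r = Complex.exp (Complex.exp (θ * Complex.I)))
    (hs : s = (m : ℂ) * Complex.exp (θ * Complex.I) * r)
    (hs0 : s ≠ 0)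
    (ht : m * (1 + Real.cos θ) ≤ (1 + t / s).re)
    (hu : m * Real.cos (2 * θ) ≤ (u / s).re) :
    β₀ ≤ ‖(α : ℂ) * u + (β : ℂ) * t + (γ : ℂ) * s‖ :=
  stmt_16_general β₀ α β γ θ m hβ₀ hα hβ hγ hcos hm r s t u hr hs ht hu
end
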